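/- arXiv:1508.05847 — 2 statements merged into one kernel-verified Lean document; each statement's English description precedes it below -/
import Mathlib

section
/- For every real number a and all real numbers t, t′, the squared exponential periodic kernel admits the uniformly convergent eigen-expansion G_a(t, t′) = e^{−2a²} I_0(2a²) + 2 ∑_{n=1}^∞ e^{−2a²} I_n(2a²) cos(2πn(t − t′)); equivalently, the Fourier basis functions 1, cos 2πt, sin 2πt, cos 4πt, sin 4πt, … are eigenfunctions of the integral operator with kernel G_a on [0,1], with eigenvalues e^{−2a²} I_0(2a²), e^{−2a²} I_1(2a²), e^{−2a²} I_1(2a²), e^{−2a²} I_2(2a²), e^{−2a²} I_2(2a²), …. (Lemma 'spectral.measure' of the paper, second part: Karhunen–Loève expansion of the SEP kernel.) -/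
open Real

/-- The modified Bessel function of the first kind of nonnegative integer order `n`,
defined by the everywhere-convergent series
`I_n(x) = ∑_{j=0}^∞ (x/2)^(2j+n) / (j! (j+n)!)`. -/
noncomputable def besselI (n : ℕ) (x : ℝ) : ℝ :=
  ∑' j : ℕ, (x / 2) ^ (2 * j + n) / ((Nat.factorial j : ℝ) * (Nat.factorial (j + n) : ℝ))

/-- The squared exponential periodic kernel with rescaling factor `a`. -/
noncomputable def sepKernel (a t₁ t₂ : ℝ) : ℝ :=
  Real.exp (-(4 * a ^ 2 * Real.sin (π * t₁ - π * t₂) ^ 2))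

/-!
With `u = e^{iθ}` one has `exp (x cos θ) = exp (x u / 2) · exp (x u⁻¹ / 2)`. Multiplying the two
exponential series and collecting the terms `(x u / 2)^j (x u⁻¹ / 2)^k` by `n = j - k` and
`m = min j k` gives the Laurent expansion `exp ((x/2)(u + u⁻¹)) = ∑_{n ∈ ℤ} I_{|n|}(x) uⁿ`.
Its real part, with the terms `±n` paired, is the Jacobi–Anger expansion
`exp (x cos θ) = I₀(x) + 2 ∑_{n ≥ 1} Iₙ(x) cos nθ`, and `G_a(t, t') = e^{-2a²} exp (2a² cos 2π(t - t'))`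
because `4 sin² s = 2 - 2 cos 2s`.
-/

open Nat

lemma hasSum_expSeries_mul_expSeries (z w : ℂ) :
    HasSum (fun p : ℕ × ℕ => z ^ p.1 / p.1 ! * (w ^ p.2 / p.2 !)) (Complex.exp (z + w)) := by
  have hexp (z : ℂ) : HasSum (fun j : ℕ => z ^ j / j !) (Complex.exp z) :=
    Complex.exp_eq_exp_ℂ ▸ NormedSpace.expSeries_div_hasSum_exp z
  rw [Complex.exp_add]
  apply (hexp z).mul (hexp w)
  -- naming `f` and `g` spares a higher-order unification that otherwise times out
  exact summable_mul_of_summable_norm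
    (f := fun j : ℕ => z ^ j / (j ! : ℂ)) (g := fun j : ℕ => w ^ j / (j ! : ℂ))
    (NormedSpace.norm_expSeries_div_summable z) (NormedSpace.norm_expSeries_div_summable w)

def diffMinEquiv : ℕ × ℕ ≃ ℤ × ℕ where
  toFun p := ((p.1 : ℤ) - p.2, min p.1 p.2)
  invFun q := (q.2 + q.1.toNat, q.2 + (-q.1).toNat)
  left_inv p := by
    ext <;> dsimp only <;> omega
  right_inv q := by
    ext <;> dsimp only <;> omega

lemma hasSum_besselI (n : ℕ) (x : ℝ) :
    HasSum (fun j : ℕ => (x / 2) ^ (2 * j + n) / ((j ! : ℝ) * ((j + n) ! : ℝ))) (besselI n x) := by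
  refine Summable.hasSum <| .of_norm_bounded
    ((Real.summable_pow_div_factorial ((x / 2) ^ 2)).mul_left (|x / 2| ^ n / n !)) fun j => ?_
  have hfact : (n ! : ℝ) ≤ (j + n) ! := by exact_mod_cast Nat.factorial_le (by omega)
  rw [norm_div, norm_mul, Real.norm_natCast, Real.norm_natCast, Real.norm_eq_abs, abs_pow,
    pow_add, pow_mul, ← abs_pow, abs_of_nonneg (sq_nonneg _)]
  calc ((x / 2) ^ 2) ^ j * |x / 2| ^ n / (j ! * (j + n) !)
      ≤ ((x / 2) ^ 2) ^ j * |x / 2| ^ n / (j ! * n !) := by gcongr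
    _ = |x / 2| ^ n / n ! * (((x / 2) ^ 2) ^ j / j !) := by ring

lemma expSeries_mul_expSeries_diffMinEquiv_symm (x : ℝ) {u : ℂ} (hu : u ≠ 0) (n : ℤ) (m : ℕ) :
    (x / 2 * u) ^ (diffMinEquiv.symm (n, m)).1 / (diffMinEquiv.symm (n, m)).1 ! *
        ((x / 2 * u⁻¹) ^ (diffMinEquiv.symm (n, m)).2 / (diffMinEquiv.symm (n, m)).2 !) =
      (((x / 2) ^ (2 * m + n.natAbs) / ((m ! : ℝ) * ((m + n.natAbs) ! : ℝ)) : ℝ) : ℂ) * u ^ n := by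
  have hm : (m ! : ℂ) ≠ 0 := Nat.cast_ne_zero.mpr (Nat.factorial_ne_zero _)
  cases n with
  | ofNat p =>
    have hp : ((m + p) ! : ℂ) ≠ 0 := Nat.cast_ne_zero.mpr (Nat.factorial_ne_zero _)
    simp only [diffMinEquiv, Equiv.symm_mk, Equiv.coe_fn_mk, Int.ofNat_eq_natCast,
      Int.toNat_natCast, Int.toNat_neg_natCast, add_zero, Int.natAbs_natCast, zpow_natCast]
    push_cast
    rw [mul_pow, mul_pow, inv_pow]
    field_simp
    ring
  | negSucc p =>
    have hp : ((m + (p + 1)) ! : ℂ) ≠ 0 := Nat.cast_ne_zero.mpr (Nat.factorial_ne_zero _)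
    simp only [diffMinEquiv, Equiv.symm_mk, Equiv.coe_fn_mk, Int.toNat_negSucc, add_zero,
      Int.neg_negSucc, Nat.cast_add, Nat.cast_one, Int.toNat_natCast_add_one, Int.natAbs_negSucc,
      Nat.succ_eq_add_one, zpow_negSucc]
    push_cast
    rw [mul_pow, mul_pow, inv_pow]
    field_simp
    ring

theorem hasSum_besselI_mul_zpow (x : ℝ) {u : ℂ} (hu : u ≠ 0) :
    HasSum (fun n : ℤ => (besselI n.natAbs x : ℂ) * u ^ n) (Complex.exp (x / 2 * (u + u⁻¹))) := by
  have hprod := hasSum_expSeries_mul_expSeries (x / 2 * u) (x / 2 * u⁻¹)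
  rw [← mul_add] at hprod
  refine (diffMinEquiv.symm.hasSum_iff.mpr hprod).prod_fiberwise fun n => ?_
  simp only [Function.comp_def, expSeries_mul_expSeries_diffMinEquiv_symm x hu]
  exact (Complex.hasSum_ofReal.mpr (hasSum_besselI _ x)).mul_right _

theorem hasSum_besselI_mul_cos_int (x θ : ℝ) :
    HasSum (fun n : ℤ => besselI n.natAbs x * Real.cos (n * θ)) (Real.exp (x * Real.cos θ)) := by
  have hsum := Complex.hasSum_re (hasSum_besselI_mul_zpow x (Complex.exp_ne_zero (θ * Complex.I)))
  have hexponent : (x / 2 * (Complex.exp (θ * Complex.I) + (Complex.exp (θ * Complex.I))⁻¹) : ℂ) =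
      ((x * Real.cos θ : ℝ) : ℂ) := by
    rw [← Complex.exp_neg, ← neg_mul, ← Complex.two_cos]
    push_cast
    ring
  rw [hexponent, Complex.exp_ofReal_re] at hsum
  convert hsum using 2 with n
  rw [← Complex.exp_int_mul, Complex.re_ofReal_mul, ← mul_assoc, ← Complex.ofReal_intCast,
    ← Complex.ofReal_mul, Complex.exp_ofReal_mul_I_re]

theorem hasSum_two_mul_besselI_mul_cos (x θ : ℝ) :
    HasSum (fun n : ℕ => 2 * besselI (n + 1) x * Real.cos ((n + 1) * θ))
      (Real.exp (x * Real.cos θ) - besselI 0 x) := by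
  have h := (hasSum_nat_add_iff' 1).mpr (hasSum_besselI_mul_cos_int x θ).nat_add_neg
  simp only [Finset.sum_range_one, Nat.cast_zero, Int.natAbs_zero, neg_zero, Int.cast_zero,
    zero_mul, Real.cos_zero, mul_one, add_sub_add_right_eq_sub] at h
  refine h.congr_fun fun n => ?_
  rw [Int.natAbs_neg, Int.natAbs_natCast, Int.cast_neg, neg_mul, Real.cos_neg]
  push_cast
  ring

lemma sepKernel_eq_exp_mul_exp_cos (a t t' : ℝ) :
    sepKernel a t t' =
      Real.exp (-(2 * a ^ 2)) * Real.exp (2 * a ^ 2 * Real.cos (2 * π * (t - t'))) := by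
  rw [sepKernel, ← Real.exp_add, show 2 * π * (t - t') = 2 * (π * t - π * t') by ring,
    Real.cos_two_mul, Real.cos_sq']
  ring_nf

/-- Karhunen–Loève (eigen-)expansion of the SEP kernel: for every real `a` and all `t, t′`,
`G_a(t, t′) = e^{−2a²} I_0(2a²) + 2 ∑_{n=1}^∞ e^{−2a²} I_n(2a²) cos(2πn(t − t′))`, the
series converging (indeed the majorizing eigenvalue series converges, so the convergence
is uniform in `t, t′`); i.e. the Fourier basis functions are eigenfunctions of the integral
operator with kernel `G_a` on `[0,1]`, with eigenvalues `e^{−2a²} I_n(2a²)` (each of the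
eigenvalues for `n ≥ 1` appearing twice, for the cosine and the sine eigenfunction). -/
theorem sep_kernel_karhunen_loeve (a : ℝ) :
    Summable (fun n : ℕ => Real.exp (-(2 * a ^ 2)) * besselI (n + 1) (2 * a ^ 2)) ∧
    ∀ t t' : ℝ,
      sepKernel a t t' =
        Real.exp (-(2 * a ^ 2)) * besselI 0 (2 * a ^ 2) +
          2 * ∑' n : ℕ, Real.exp (-(2 * a ^ 2)) * besselI (n + 1) (2 * a ^ 2) *
            Real.cos (2 * π * (n + 1) * (t - t')) := by
  have hexpansion (θ : ℝ) :=
    (hasSum_two_mul_besselI_mul_cos (2 * a ^ 2) θ).mul_left (Real.exp (-(2 * a ^ 2)) / 2)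
  refine ⟨(hexpansion 0).summable.congr fun n => ?_, fun t t' => ?_⟩
  · rw [mul_zero, Real.cos_zero]
    ring
  · have hterm (n : ℕ) : Real.exp (-(2 * a ^ 2)) * besselI (n + 1) (2 * a ^ 2) *
          Real.cos (2 * π * (n + 1) * (t - t')) = Real.exp (-(2 * a ^ 2)) / 2 *
            (2 * besselI (n + 1) (2 * a ^ 2) * Real.cos ((n + 1) * (2 * π * (t - t')))) := by
      ring_nf
    rw [sepKernel_eq_exp_mul_exp_cos, tsum_congr hterm, (hexpansion _).tsum_eq]
    ring
end

section
/- For every real number a, the spectral measure of the squared exponential periodic kernel has subexponential tails: the series ∑_{n∈ℤ} e^{2π|n|} e^{−2a²} I_{|n|}(2a²) converges and is bounded above by 2 exp(a²(e^{2π} + e^{−2π} − 2)). (Tail bound established in Section 4 of the paper.) -/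
open Real

/-!
Multiplying the exponential series of `exp (x / (2y))` and `exp (xy / 2)`, the terms
`(x / (2y))ʲ / j! * (xy / 2)ᵏ / k!` with `k = j + n` add up to `yⁿ Iₙ(x)`. For `x ≥ 0` and
`y > 0` all terms are nonnegative, so dropping those with `k < j` gives
`∑ₙ yⁿ Iₙ(x) ≤ exp (x / 2 * (y + y⁻¹))`. Take `y = e^{2π}`, `x = 2a²`, and bound the sum over
`ℤ` by twice the sum over `ℕ`.
-/

lemma pow_mul_besselI_eq_tsum {y : ℝ} (hy : y ≠ 0) (n : ℕ) (x : ℝ) :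
    y ^ n * besselI n x =
      ∑' j : ℕ, (x / (2 * y)) ^ j / j.factorial *
        ((x * y / 2) ^ (j + n) / (j + n).factorial) := by
  rw [besselI, ← tsum_mul_left]
  congr 1 with j
  rw [div_pow, div_pow, mul_pow, div_pow, show 2 * j + n = j + (j + n) by ring, pow_add,
    mul_pow, pow_add y]
  field_simp
  ring

lemma besselI_nonneg (n : ℕ) {x : ℝ} (hx : 0 ≤ x) : 0 ≤ besselI n x :=
  tsum_nonneg fun _ => by positivity

lemma injective_snd_snd_add_fst : Function.Injective fun p : ℕ × ℕ => (p.2, p.2 + p.1) := by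
  rintro ⟨n, j⟩ ⟨n', j'⟩ h
  simp only [Prod.mk.injEq] at h
  ext <;> omega

section ShiftedProduct

variable {A B : ℕ → ℝ}

lemma summable_mul_add_of_nonneg (hA : Summable A) (hB : Summable B) (hA0 : 0 ≤ A)
    (hB0 : 0 ≤ B) : Summable fun p : ℕ × ℕ => A p.2 * B (p.2 + p.1) :=
  (hA.mul_of_nonneg hB hA0 hB0).comp_injective injective_snd_snd_add_fst

lemma summable_tsum_mul_add_of_nonneg (hA : Summable A) (hB : Summable B) (hA0 : 0 ≤ A)
    (hB0 : 0 ≤ B) : Summable fun n => ∑' j, A j * B (j + n) :=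
  (summable_mul_add_of_nonneg hA hB hA0 hB0).prod

lemma tsum_tsum_mul_add_le_of_nonneg (hA : Summable A) (hB : Summable B) (hA0 : 0 ≤ A)
    (hB0 : 0 ≤ B) : ∑' n, ∑' j, A j * B (j + n) ≤ (∑' j, A j) * ∑' k, B k := by
  have hAB := hA.mul_of_nonneg hB hA0 hB0
  have hshift := summable_mul_add_of_nonneg hA hB hA0 hB0
  rw [← hshift.tsum_prod' hshift.prod_factor, hA.tsum_mul_tsum hB hAB]
  exact hshift.tsum_le_tsum_of_inj _ injective_snd_snd_add_fst
    (fun _ _ => mul_nonneg (hA0 _) (hB0 _)) (fun _ => le_rfl) hAB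

end ShiftedProduct

section GeneratingFunction

variable {x y : ℝ}

lemma summable_pow_mul_besselI (hx : 0 ≤ x) (hy : 0 < y) :
    Summable fun n : ℕ => y ^ n * besselI n x := by
  simp_rw [pow_mul_besselI_eq_tsum hy.ne']
  exact summable_tsum_mul_add_of_nonneg (A := fun j => (x / (2 * y)) ^ j / j.factorial)
    (B := fun k => (x * y / 2) ^ k / k.factorial) (Real.summable_pow_div_factorial _)
    (Real.summable_pow_div_factorial _) (fun _ => by positivity) (fun _ => by positivity)

lemma tsum_pow_mul_besselI_le (hx : 0 ≤ x) (hy : 0 < y) :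
    ∑' n : ℕ, y ^ n * besselI n x ≤ exp (x / 2 * (y + y⁻¹)) := by
  have hexp (z : ℝ) : ∑' k : ℕ, z ^ k / k.factorial = exp z := by
    rw [Real.exp_eq_exp_ℝ]; exact (NormedSpace.expSeries_div_hasSum_exp z).tsum_eq
  simp_rw [pow_mul_besselI_eq_tsum hy.ne']
  calc _ ≤ exp (x / (2 * y)) * exp (x * y / 2) := by
        rw [← hexp, ← hexp]
        exact tsum_tsum_mul_add_le_of_nonneg (A := fun j => (x / (2 * y)) ^ j / j.factorial)
          (B := fun k => (x * y / 2) ^ k / k.factorial) (Real.summable_pow_div_factorial _)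
          (Real.summable_pow_div_factorial _) (fun _ => by positivity) (fun _ => by positivity)
    _ = exp (x / 2 * (y + y⁻¹)) := by
        rw [← Real.exp_add]; congr 1; field_simp; ring

end GeneratingFunction

lemma HasSum.int_natAbs {G : Type*} [AddCommGroup G] [TopologicalSpace G]
    [IsTopologicalAddGroup G] {f : ℕ → G} {s : G} (hf : HasSum f s) :
    HasSum (fun n : ℤ => f n.natAbs) (s + s - f 0) :=
  HasSum.of_nat_of_neg (by simpa using hf) (by simpa using hf)

/-- Subexponential tails of the spectral measure of the SEP kernel: for every real `a`,
`∑_{n ∈ ℤ} e^{2π|n|} e^{−2a²} I_{|n|}(2a²)` converges and is at most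
`2 exp(a²(e^{2π} + e^{−2π} − 2))`. -/
theorem sep_spectral_measure_subexponential_tail (a : ℝ) :
    Summable (fun n : ℤ =>
      Real.exp (2 * π * |(n : ℝ)|) * (Real.exp (-(2 * a ^ 2)) * besselI n.natAbs (2 * a ^ 2))) ∧
    ∑' n : ℤ, Real.exp (2 * π * |(n : ℝ)|) *
        (Real.exp (-(2 * a ^ 2)) * besselI n.natAbs (2 * a ^ 2)) ≤
      2 * Real.exp (a ^ 2 * (Real.exp (2 * π) + Real.exp (-(2 * π)) - 2)) := by
  set x := 2 * a ^ 2 with hx_def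
  have hx : 0 ≤ x := by positivity
  have hsum :=
    ((summable_pow_mul_besselI hx (exp_pos (2 * π))).hasSum.mul_left (exp (-x))).int_natAbs
  have hterm (n : ℤ) : exp (2 * π * |(n : ℝ)|) * (exp (-x) * besselI n.natAbs x) =
      exp (-x) * (exp (2 * π) ^ n.natAbs * besselI n.natAbs x) := by
    rw [← Real.exp_nat_mul, Nat.cast_natAbs, Int.cast_abs, mul_comm _ (2 * π), mul_left_comm]
  simp_rw [hterm]
  refine ⟨hsum.summable, ?_⟩
  have hzero : 0 ≤ exp (-x) * (exp (2 * π) ^ 0 * besselI 0 x) := by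
    have := besselI_nonneg 0 hx; positivity
  calc _ ≤ 2 * (exp (-x) * ∑' n : ℕ, exp (2 * π) ^ n * besselI n x) := by
        rw [hsum.tsum_eq]; linarith
    _ ≤ 2 * (exp (-x) * exp (x / 2 * (exp (2 * π) + (exp (2 * π))⁻¹))) := by
        gcongr; exact tsum_pow_mul_besselI_le hx (exp_pos (2 * π))
    _ = _ := by rw [← Real.exp_neg, ← Real.exp_add]; congr 2; rw [hx_def]; ring
end
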